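/- arXiv:1911.02535 — 2 statements merged into one kernel-verified Lean document; each statement's English description precedes it below -/
import Mathlib

section
/- (Consistency, Lemma 3, concrete form.) Let d ≥ 1, ν > 0, let a : ℝ^d → ℝ^d be a smooth vector field with ∇·a = 0, and let τ_M : ℝ^d → ℝ be continuous. Suppose u : ℝ^d → ℝ^d is a smooth vector field with ∇·u = 0, p : ℝ^d → ℝ is smooth, f : ℝ^d → ℝ^d is continuous, and the strong Oseen equation a·∇u − ∇·(2ν∇ˢu) + ∇p = f holds pointwise on ℝ^d. Then for every smooth compactly supported vector field v : ℝ^d → ℝ^d with ∇·v = 0 and every smooth compactly supported q : ℝ^d → ℝ, one has c(a,u,v) + k(u,v) + ∫_{ℝ^d} τ_M (a·∇u − ∇·(2ν∇ˢu) + ∇p)·(a·∇v + ∇q) dx = ∫_{ℝ^d} f·v dx + ∫_{ℝ^d} τ_M f·(a·∇v + ∇q) dx. -/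
open MeasureTheory

noncomputable section

variable {d : ℕ}

/-- Partial derivative `∂_j f` of a scalar field. -/
def pder (f : (Fin d → ℝ) → ℝ) (j : Fin d) (x : Fin d → ℝ) : ℝ :=
  fderiv ℝ f x (Pi.single j 1)

/-- Divergence `∇·v` of a vector field. -/
def vdiv (v : (Fin d → ℝ) → Fin d → ℝ) (x : Fin d → ℝ) : ℝ :=
  ∑ i, pder (fun y => v y i) i x

/-- `(a·∇v)_i = ∑_j a_j ∂_j v_i`. -/
def adv (a v : (Fin d → ℝ) → Fin d → ℝ) (x : Fin d → ℝ) (i : Fin d) : ℝ :=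
  ∑ j, a x j * pder (fun y => v y i) j x

/-- Gradient `(∇q)_i` of a scalar field. -/
def grd (q : (Fin d → ℝ) → ℝ) (x : Fin d → ℝ) (i : Fin d) : ℝ :=
  pder q i x

/-- Symmetrized gradient `(∇ˢv)_{ij} = (∂_j v_i + ∂_i v_j)/2`. -/
def symGrad (v : (Fin d → ℝ) → Fin d → ℝ) (x : Fin d → ℝ) (i j : Fin d) : ℝ :=
  (pder (fun y => v y i) j x + pder (fun y => v y j) i x) / 2

/-- `(∇·(2ν∇ˢv))_i`, the row-wise divergence of the viscous stress. -/
def divVisc (ν : ℝ) (v : (Fin d → ℝ) → Fin d → ℝ) (x : Fin d → ℝ) (i : Fin d) : ℝ :=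
  ∑ j, pder (fun y => 2 * ν * symGrad v y i j) j x

/-- Convection form `c(a,v₁,v₂) = ∫ (a·∇v₁)·v₂`. -/
def convc (a v₁ v₂ : (Fin d → ℝ) → Fin d → ℝ) : ℝ :=
  ∫ x, ∑ i, adv a v₁ x i * v₂ x i

/-- Conservative convection form `c_cons(a,v₁,v₂) = −∫ v₁·(a·∇v₂)`. -/
def convcons (a v₁ v₂ : (Fin d → ℝ) → Fin d → ℝ) : ℝ :=
  -∫ x, ∑ i, v₁ x i * adv a v₂ x i

/-- Skew convection form `c_skew = (c + c_cons)/2`. -/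
def convskew (a v₁ v₂ : (Fin d → ℝ) → Fin d → ℝ) : ℝ :=
  (convc a v₁ v₂ + convcons a v₁ v₂) / 2

/-- Viscous form `k(v₁,v₂) = ∫ 2ν ∇ˢv₁ : ∇ˢv₂`. -/
def kvisc (ν : ℝ) (v₁ v₂ : (Fin d → ℝ) → Fin d → ℝ) : ℝ :=
  ∫ x, ∑ i, ∑ j, 2 * ν * symGrad v₁ x i j * symGrad v₂ x i j

/-- Reduced Oseen form `A_red((w,r),(v,q))`. -/
def Ared (ν : ℝ) (a : (Fin d → ℝ) → Fin d → ℝ) (τ : (Fin d → ℝ) → ℝ)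
    (w : (Fin d → ℝ) → Fin d → ℝ) (r : (Fin d → ℝ) → ℝ)
    (v : (Fin d → ℝ) → Fin d → ℝ) (q : (Fin d → ℝ) → ℝ) : ℝ :=
  convc a w v + kvisc ν w v +
    ∫ x, τ x * ∑ i, (adv a w x i - divVisc ν w x i + grd r x i) * (adv a v x i + grd q x i)

/-- `|||(v,q)|||² = k(v,v) + ∫ τ_M |a·∇v + ∇q|²`. -/
def tnormSq (ν : ℝ) (a : (Fin d → ℝ) → Fin d → ℝ) (τ : (Fin d → ℝ) → ℝ)
    (v : (Fin d → ℝ) → Fin d → ℝ) (q : (Fin d → ℝ) → ℝ) : ℝ :=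
  kvisc ν v v + ∫ x, τ x * ∑ i, (adv a v x i + grd q x i) ^ 2

/-- `|||(v,q)|||`. -/
def tnorm (ν : ℝ) (a : (Fin d → ℝ) → Fin d → ℝ) (τ : (Fin d → ℝ) → ℝ)
    (v : (Fin d → ℝ) → Fin d → ℝ) (q : (Fin d → ℝ) → ℝ) : ℝ :=
  Real.sqrt (tnormSq ν a τ v q)

/-- `|||(v,q)|||₊² = |||(v,q)|||² + ∫ τ_M |∇·(2ν∇ˢv)|² + ∫ τ_M⁻¹ |v|²`. -/
def tnormPlusSq (ν : ℝ) (a : (Fin d → ℝ) → Fin d → ℝ) (τ : (Fin d → ℝ) → ℝ)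
    (v : (Fin d → ℝ) → Fin d → ℝ) (q : (Fin d → ℝ) → ℝ) : ℝ :=
  tnormSq ν a τ v q + (∫ x, τ x * ∑ i, (divVisc ν v x i) ^ 2)
    + ∫ x, (τ x)⁻¹ * ∑ i, (v x i) ^ 2

/-- `|||(v,q)|||₊`. -/
def tnormPlus (ν : ℝ) (a : (Fin d → ℝ) → Fin d → ℝ) (τ : (Fin d → ℝ) → ℝ)
    (v : (Fin d → ℝ) → Fin d → ℝ) (q : (Fin d → ℝ) → ℝ) : ℝ :=
  Real.sqrt (tnormPlusSq ν a τ v q)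


section OseenHelpers
variable {d : ℕ}

lemma contDiff_pder' {f : (Fin d → ℝ) → ℝ} (hf : ContDiff ℝ (⊤ : ℕ∞) f) (j : Fin d) :
    ContDiff ℝ (⊤ : ℕ∞) (pder f j) :=
  (hf.fderiv_right (by simp)).clm_apply contDiff_const

lemma continuous_pder' {f : (Fin d → ℝ) → ℝ} (hf : ContDiff ℝ (⊤ : ℕ∞) f) (j : Fin d) :
    Continuous (pder f j) := (contDiff_pder' hf j).continuous

lemma hcs_pder' {f : (Fin d → ℝ) → ℝ} (hc : HasCompactSupport f) (j : Fin d) :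
    HasCompactSupport (pder f j) := hc.fderiv_apply ℝ (Pi.single j 1)

lemma hcs_comp' {v : (Fin d → ℝ) → Fin d → ℝ} (hv : HasCompactSupport v) (i : Fin d) :
    HasCompactSupport (fun x => v x i) :=
  hv.comp_left (g := fun w : Fin d → ℝ => w i) rfl

lemma integ_mul' {φ ψ : (Fin d → ℝ) → ℝ} (hφ : Continuous φ) (hψ : Continuous ψ)
    (hc : HasCompactSupport ψ) : Integrable (fun x => φ x * ψ x) :=
  (hφ.mul hψ).integrable_of_hasCompactSupport hc.mul_left

lemma ibp' {φ ψ : (Fin d → ℝ) → ℝ} (hφ : ContDiff ℝ (⊤ : ℕ∞) φ) (hψ : ContDiff ℝ (⊤ : ℕ∞) ψ)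
    (hc : HasCompactSupport ψ) (j : Fin d) :
    ∫ x, pder φ j x * ψ x = -∫ x, φ x * pder ψ j x := by
  have h := integral_mul_fderiv_eq_neg_fderiv_mul_of_integrable
    (f := φ) (g := ψ) (v := Pi.single j 1) (μ := volume)
    (integ_mul' (continuous_pder' hφ j) hψ.continuous hc)
    (integ_mul' hφ.continuous (continuous_pder' hψ j) (hcs_pder' hc j))
    (integ_mul' hφ.continuous hψ.continuous hc)
    (fun x _ => hφ.differentiable (by simp) x) (fun x _ => hψ.differentiable (by simp) x)
  unfold pder
  linarith

lemma ibp2' {φ ψ : (Fin d → ℝ) → ℝ} (hφ : ContDiff ℝ (⊤ : ℕ∞) φ) (hψ : ContDiff ℝ (⊤ : ℕ∞) ψ)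
    (hc : HasCompactSupport ψ) (j : Fin d) :
    ∫ x, φ x * pder ψ j x = -∫ x, pder φ j x * ψ x := by
  have h := ibp' hφ hψ hc j
  linarith

end OseenHelpers

/-- consistency of the reduced Oseen formulation (Lemma 3, concrete form). -/
theorem oseen_consistency (hd : 1 ≤ d) (ν : ℝ) (hν : 0 < ν)
    (a : (Fin d → ℝ) → Fin d → ℝ) (ha : ContDiff ℝ (⊤ : ℕ∞) a) (hdiva : ∀ x, vdiv a x = 0)
    (τ : (Fin d → ℝ) → ℝ) (hτ : Continuous τ)
    (u : (Fin d → ℝ) → Fin d → ℝ) (hu : ContDiff ℝ (⊤ : ℕ∞) u) (hdivu : ∀ x, vdiv u x = 0)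
    (p : (Fin d → ℝ) → ℝ) (hp : ContDiff ℝ (⊤ : ℕ∞) p)
    (f : (Fin d → ℝ) → Fin d → ℝ) (hf : Continuous f)
    (heq : ∀ x i, adv a u x i - divVisc ν u x i + grd p x i = f x i) :
    ∀ v : (Fin d → ℝ) → Fin d → ℝ, ContDiff ℝ (⊤ : ℕ∞) v → HasCompactSupport v →
      (∀ x, vdiv v x = 0) →
    ∀ q : (Fin d → ℝ) → ℝ, ContDiff ℝ (⊤ : ℕ∞) q → HasCompactSupport q →
      convc a u v + kvisc ν u v +
        (∫ x, τ x * ∑ i,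
          (adv a u x i - divVisc ν u x i + grd p x i) * (adv a v x i + grd q x i)) =
      (∫ x, ∑ i, f x i * v x i) +
        ∫ x, τ x * ∑ i, f x i * (adv a v x i + grd q x i) := by
  intro v hv hvc hdivv q hq hqc
  have hstab : (∫ x, τ x * ∑ i,
        (adv a u x i - divVisc ν u x i + grd p x i) * (adv a v x i + grd q x i))
      = ∫ x, τ x * ∑ i, f x i * (adv a v x i + grd q x i) := by
    simp only [heq]
  rw [hstab]
  have hui : ∀ i, ContDiff ℝ (⊤ : ℕ∞) (fun y => u y i) := fun i => (contDiff_pi.mp hu) i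
  have hvi : ∀ i, ContDiff ℝ (⊤ : ℕ∞) (fun y => v y i) := fun i => (contDiff_pi.mp hv) i
  have hai : ∀ i, ContDiff ℝ (⊤ : ℕ∞) (fun y => a y i) := fun i => (contDiff_pi.mp ha) i
  have hvci : ∀ i, HasCompactSupport (fun y => v y i) := fun i => hcs_comp' hvc i
  have hSc : ∀ i j, ContDiff ℝ (⊤ : ℕ∞) (fun y => 2 * ν * symGrad u y i j) := by
    intro i j
    exact contDiff_const.mul
      (((contDiff_pder' (hui i) j).add (contDiff_pder' (hui j) i)).div_const 2)
  have hadvc : ∀ i : Fin d, Continuous (fun x => adv a u x i) := by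
    intro i
    unfold adv
    exact continuous_finset_sum _ fun j _ =>
      ((hai j).continuous.mul (continuous_pder' (hui i) j))
  have hdvc : ∀ i : Fin d, Continuous (fun x => divVisc ν u x i) := by
    intro i
    unfold divVisc
    exact continuous_finset_sum _ fun j _ => continuous_pder' (hSc i j) j
  have int1 : ∀ i : Fin d, Integrable (fun x => adv a u x i * v x i) := fun i =>
    integ_mul' (hadvc i) (hvi i).continuous (hvci i)
  have int2 : ∀ i : Fin d, Integrable (fun x => divVisc ν u x i * v x i) := fun i =>
    integ_mul' (hdvc i) (hvi i).continuous (hvci i)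
  have int3 : ∀ i : Fin d, Integrable (fun x => pder p i x * v x i) := fun i =>
    integ_mul' (continuous_pder' hp i) (hvi i).continuous (hvci i)
  have heq' : ∀ x i, adv a u x i - divVisc ν u x i + pder p i x = f x i := heq
  have hsplit : (∫ x, ∑ i, f x i * v x i)
      = (∫ x, ∑ i, adv a u x i * v x i) - (∫ x, ∑ i, divVisc ν u x i * v x i)
        + ∫ x, ∑ i, pder p i x * v x i := by
    have hsub : Integrable (fun x => (∑ i, adv a u x i * v x i)
        - ∑ i, divVisc ν u x i * v x i) volume :=
      (integrable_finset_sum _ fun i _ => int1 i).sub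
        (integrable_finset_sum _ fun i _ => int2 i)
    rw [← integral_sub (integrable_finset_sum _ fun i _ => int1 i)
        (integrable_finset_sum _ fun i _ => int2 i),
      ← integral_add hsub (integrable_finset_sum _ fun i _ => int3 i)]
    refine integral_congr_ae (Filter.Eventually.of_forall fun x => ?_)
    show (∑ i, f x i * v x i)
        = (∑ i, adv a u x i * v x i) - (∑ i, divVisc ν u x i * v x i)
          + ∑ i, pder p i x * v x i
    rw [← Finset.sum_sub_distrib, ← Finset.sum_add_distrib]
    exact Finset.sum_congr rfl fun i _ => by rw [← heq' x i]; ring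
  have claimA : (∫ x, ∑ i, pder p i x * v x i) = 0 := by
    rw [integral_finset_sum _ fun i _ => int3 i]
    calc ∑ i, ∫ x, pder p i x * v x i
        = ∑ i, -∫ x, p x * pder (fun y => v y i) i x :=
          Finset.sum_congr rfl fun i _ => ibp' hp (hvi i) (hvci i) i
      _ = -∑ i, ∫ x, p x * pder (fun y => v y i) i x := by
          rw [← Finset.sum_neg_distrib]
      _ = -∫ x, ∑ i, p x * pder (fun y => v y i) i x := by
          rw [integral_finset_sum _ fun i _ =>
            integ_mul' hp.continuous (continuous_pder' (hvi i) i) (hcs_pder' (hvci i) i)]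
      _ = 0 := by
          have hz : ∀ x : Fin d → ℝ, (∑ i, p x * pder (fun y => v y i) i x) = 0 := by
            intro x
            rw [← Finset.mul_sum]
            have := hdivv x
            unfold vdiv at this
            rw [this, mul_zero]
          simp only [hz, integral_zero, neg_zero]
  have intS : ∀ i j : Fin d,
      Integrable (fun x => (2 * ν * symGrad u x i j) * pder (fun y => v y i) j x) :=
    fun i j => integ_mul' (hSc i j).continuous (continuous_pder' (hvi i) j)
      (hcs_pder' (hvci i) j)
  have intD : ∀ i j : Fin d,
      Integrable (fun x => pder (fun y => 2 * ν * symGrad u y i j) j x * v x i) :=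
    fun i j => integ_mul' (continuous_pder' (hSc i j) j) (hvi i).continuous (hvci i)
  have hsymm : ∀ (x : Fin d → ℝ) i j, symGrad u x i j = symGrad u x j i := by
    intro x i j
    unfold symGrad
    ring
  have hpt : ∀ x : Fin d → ℝ,
      (∑ i, ∑ j, 2 * ν * symGrad u x i j * symGrad v x i j)
        = ∑ i, ∑ j, (2 * ν * symGrad u x i j) * pder (fun y => v y i) j x := by
    intro x
    have expand : ∀ i j : Fin d, 2 * ν * symGrad u x i j * symGrad v x i j
        = (ν * symGrad u x i j) * pder (fun y => v y i) j x
          + (ν * symGrad u x i j) * pder (fun y => v y j) i x := by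
      intro i j
      unfold symGrad
      ring
    simp only [expand, Finset.sum_add_distrib]
    have hswap : (∑ i, ∑ j, (ν * symGrad u x i j) * pder (fun y => v y j) i x)
        = ∑ i, ∑ j, (ν * symGrad u x i j) * pder (fun y => v y i) j x := by
      rw [Finset.sum_comm]
      exact Finset.sum_congr rfl fun i _ => Finset.sum_congr rfl fun j _ => by
        rw [hsymm x j i]
    rw [hswap]
    rw [← two_mul, Finset.mul_sum]
    exact Finset.sum_congr rfl fun i _ => by
      rw [Finset.mul_sum]
      exact Finset.sum_congr rfl fun j _ => by ring
  have claimB : kvisc ν u v = -∫ x, ∑ i, divVisc ν u x i * v x i := by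
    unfold kvisc
    calc (∫ x, ∑ i, ∑ j, 2 * ν * symGrad u x i j * symGrad v x i j)
        = ∫ x, ∑ i, ∑ j, (2 * ν * symGrad u x i j) * pder (fun y => v y i) j x :=
          integral_congr_ae (Filter.Eventually.of_forall fun x => hpt x)
      _ = ∑ i, ∑ j, ∫ x, (2 * ν * symGrad u x i j) * pder (fun y => v y i) j x := by
          rw [integral_finset_sum _ fun i _ => integrable_finset_sum _ fun j _ => intS i j]
          exact Finset.sum_congr rfl fun i _ => integral_finset_sum _ fun j _ => intS i j
      _ = ∑ i, ∑ j, -∫ x, pder (fun y => 2 * ν * symGrad u y i j) j x * v x i :=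
          Finset.sum_congr rfl fun i _ => Finset.sum_congr rfl fun j _ =>
            ibp2' (hSc i j) (hvi i) (hvci i) j
      _ = -∑ i, ∑ j, ∫ x, pder (fun y => 2 * ν * symGrad u y i j) j x * v x i := by
          simp [Finset.sum_neg_distrib]
      _ = -∑ i, ∫ x, ∑ j, pder (fun y => 2 * ν * symGrad u y i j) j x * v x i := by
          congr 1
          exact Finset.sum_congr rfl fun i _ =>
            (integral_finset_sum _ fun j _ => intD i j).symm
      _ = -∫ x, ∑ i, divVisc ν u x i * v x i := by
          congr 1
          rw [integral_finset_sum _ fun i _ => int2 i]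
          refine Finset.sum_congr rfl fun i _ => ?_
          refine integral_congr_ae (Filter.Eventually.of_forall fun x => ?_)
          show (∑ j, pder (fun y => 2 * ν * symGrad u y i j) j x * v x i)
              = divVisc ν u x i * v x i
          unfold divVisc
          rw [Finset.sum_mul]
  have hconvc : convc a u v = ∫ x, ∑ i, adv a u x i * v x i := rfl
  rw [hsplit, claimA, claimB, hconvc]
  ring
end
end

section
/- (Error estimate, Theorem 1, concrete form.) Let d ≥ 1, ν > 0, let a : ℝ^d → ℝ^d be a smooth vector field with ∇·a = 0, and let τ_M : ℝ^d → ℝ be continuous with τ_M > 0 pointwise. Let V_h be a real linear subspace of the space of smooth compactly supported vector fields on ℝ^d consisting of divergence-free fields, and let Q_t be a real linear subspace of the space of smooth compactly supported scalar fields on ℝ^d. Assume every v ∈ V_h satisfies the inverse-estimate hypothesis ∫_{ℝ^d} τ_M |∇·(2ν∇ˢv)|² dx ≤ ∫_{ℝ^d} 2ν |∇ˢv|² dx. Let u : ℝ^d → ℝ^d be a smooth compactly supported vector field with ∇·u = 0, let p : ℝ^d → ℝ be smooth and compactly supported, and suppose u_h ∈ V_h and p̃ ∈ Q_t satisfy the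 Galerkin orthogonality A_red((u − u_h, p − p̃),(v,q)) = 0 for all (v,q) ∈ V_h × Q_t. Then for every (w, r̃) ∈ V_h × Q_t, |||(u − u_h, p − p̃)||| ≤ 7 |||(u − w, p − r̃)|||₊. -/
open MeasureTheory

noncomputable section

variable {d : ℕ}

namespace OAux


lemma contDiff_pder {f : (Fin d → ℝ) → ℝ} (hf : ContDiff ℝ (⊤ : ℕ∞) f) (j : Fin d) :
    ContDiff ℝ (⊤ : ℕ∞) (pder f j) :=
  (hf.fderiv_right ((by simp))).clm_apply contDiff_const

lemma cont_pder {f : (Fin d → ℝ) → ℝ} (hf : ContDiff ℝ (⊤ : ℕ∞) f) (j : Fin d) :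
    Continuous (pder f j) := (contDiff_pder hf j).continuous

lemma pder_zero_of_nmem {f : (Fin d → ℝ) → ℝ} {x : Fin d → ℝ} (hx : x ∉ tsupport f) (j : Fin d) :
    pder f j x = 0 := by
  unfold pder; rw [fderiv_of_notMem_tsupport _ hx]; rfl

lemma comp_smooth {v : (Fin d → ℝ) → Fin d → ℝ} (hv : ContDiff ℝ (⊤ : ℕ∞) v) (i : Fin d) :
    ContDiff ℝ (⊤ : ℕ∞) (fun y => v y i) := contDiff_pi.mp hv i

lemma tsupport_comp {v : (Fin d → ℝ) → Fin d → ℝ} (i : Fin d) :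
    tsupport (fun y => v y i) ⊆ tsupport v := by
  apply closure_mono
  intro x hx
  simp only [Function.mem_support] at hx ⊢
  intro h; exact hx (by rw [h]; rfl)

lemma comp_zero_of_nmem {v : (Fin d → ℝ) → Fin d → ℝ} {x : Fin d → ℝ}
    (hx : x ∉ tsupport v) (i : Fin d) : v x i = 0 := by
  have : v x = 0 := image_eq_zero_of_notMem_tsupport hx
  rw [this]; rfl

lemma pder_comp_zero_of_nmem {v : (Fin d → ℝ) → Fin d → ℝ} {x : Fin d → ℝ}
    (hx : x ∉ tsupport v) (i j : Fin d) : pder (fun y => v y i) j x = 0 :=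
  pder_zero_of_nmem (fun h => hx (tsupport_comp i h)) j

lemma pder_add {f g : (Fin d → ℝ) → ℝ} (hf : ContDiff ℝ (⊤ : ℕ∞) f) (hg : ContDiff ℝ (⊤ : ℕ∞) g)
    (j : Fin d) (x : Fin d → ℝ) :
    pder (fun y => f y + g y) j x = pder f j x + pder g j x := by
  unfold pder
  rw [fderiv_fun_add (hf.differentiable (by simp) x) (hg.differentiable (by simp) x)]; rfl

lemma pder_sub {f g : (Fin d → ℝ) → ℝ} (hf : ContDiff ℝ (⊤ : ℕ∞) f) (hg : ContDiff ℝ (⊤ : ℕ∞) g)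
    (j : Fin d) (x : Fin d → ℝ) :
    pder (fun y => f y - g y) j x = pder f j x - pder g j x := by
  unfold pder
  rw [fderiv_fun_sub (hf.differentiable (by simp) x) (hg.differentiable (by simp) x)]; rfl

lemma pder_const_mul {f : (Fin d → ℝ) → ℝ} (hf : ContDiff ℝ (⊤ : ℕ∞) f) (c : ℝ)
    (j : Fin d) (x : Fin d → ℝ) :
    pder (fun y => c * f y) j x = c * pder f j x := by
  unfold pder
  rw [fderiv_const_mul (hf.differentiable (by simp) x) c]; rfl

lemma pder_mul {f g : (Fin d → ℝ) → ℝ} (hf : ContDiff ℝ (⊤ : ℕ∞) f) (hg : ContDiff ℝ (⊤ : ℕ∞) g)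
    (j : Fin d) (x : Fin d → ℝ) :
    pder (fun y => f y * g y) j x = pder f j x * g x + f x * pder g j x := by
  unfold pder
  rw [fderiv_fun_mul (hf.differentiable (by simp) x) (hg.differentiable (by simp) x)]; simp; ring

lemma integ {F : (Fin d → ℝ) → ℝ} {K : Set (Fin d → ℝ)} (hF : Continuous F)
    (hK : IsCompact K) (h0 : ∀ x ∉ K, F x = 0) : Integrable F :=
  hF.integrable_of_hasCompactSupport (HasCompactSupport.intro hK h0)

lemma ibp_mul {f g : (Fin d → ℝ) → ℝ} (hf : ContDiff ℝ (⊤ : ℕ∞) f) (hg : ContDiff ℝ (⊤ : ℕ∞) g)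
    (hgc : HasCompactSupport g) (j : Fin d) :
    ∫ x, f x * pder g j x = - ∫ x, pder f j x * g x := by
  have h1 : Integrable (fun x => pder f j x * g x) :=
    integ ((cont_pder hf j).mul (hg.continuous)) hgc
      (fun x hx => by rw [image_eq_zero_of_notMem_tsupport hx, mul_zero])
  have h2 : Integrable (fun x => f x * pder g j x) :=
    integ ((hf.continuous).mul (cont_pder hg j)) hgc
      (fun x hx => by rw [pder_zero_of_nmem hx, mul_zero])
  have h3 : Integrable (fun x => f x * g x) :=
    integ ((hf.continuous).mul (hg.continuous)) hgc
      (fun x hx => by rw [image_eq_zero_of_notMem_tsupport hx, mul_zero])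
  exact integral_mul_fderiv_eq_neg_fderiv_mul_of_integrable h1 h2 h3
    (fun x _ => hf.differentiable (by simp) x) (fun x _ => hg.differentiable (by simp) x)

lemma cs_int {f g h : (Fin d → ℝ) → ℝ} (hf : Integrable f) (hg : Integrable g)
    (hh : Integrable h) (hf0 : ∀ x, 0 ≤ f x) (hh0 : ∀ x, 0 ≤ h x)
    (hpt : ∀ (t : ℝ) x, 0 ≤ h x * (t * t) + 2 * g x * t + f x) :
    |∫ x, g x| ≤ Real.sqrt (∫ x, f x) * Real.sqrt (∫ x, h x) := by
  have key : ∀ t : ℝ, 0 ≤ (∫ x, h x) * (t * t) + (2 * ∫ x, g x) * t + (∫ x, f x) := by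
    intro t
    have e1 : (fun x => h x * (t * t) + 2 * g x * t + f x)
        = fun x => ((t * t) * h x + (2 * t) * g x) + f x := funext fun x => by ring
    have : (∫ x, h x) * (t * t) + (2 * ∫ x, g x) * t + (∫ x, f x)
        = ∫ x, (h x * (t * t) + 2 * g x * t + f x) := by
      have i1 : ∫ x, ((t * t) * h x + (2 * t) * g x + f x)
          = (∫ x, ((t * t) * h x + (2 * t) * g x)) + ∫ x, f x :=
        integral_add ((hh.const_mul (t*t)).add (hg.const_mul (2*t))) hf
      have i2 : ∫ x, ((t * t) * h x + (2 * t) * g x)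
          = (∫ x, (t * t) * h x) + ∫ x, (2 * t) * g x :=
        integral_add (hh.const_mul (t*t)) (hg.const_mul (2*t))
      rw [e1, i1, i2, integral_const_mul, integral_const_mul]
      ring
    rw [this]
    exact integral_nonneg (fun x => hpt t x)
  have hd := discrim_le_zero key
  unfold discrim at hd
  have hA : 0 ≤ ∫ x, f x := integral_nonneg hf0
  have hC : 0 ≤ ∫ x, h x := integral_nonneg hh0
  have hsq : (∫ x, g x) ^ 2 ≤ (∫ x, f x) * (∫ x, h x) := by nlinarith
  calc |∫ x, g x| = Real.sqrt ((∫ x, g x) ^ 2) := by rw [Real.sqrt_sq_eq_abs]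
    _ ≤ Real.sqrt ((∫ x, f x) * (∫ x, h x)) := Real.sqrt_le_sqrt hsq
    _ = Real.sqrt (∫ x, f x) * Real.sqrt (∫ x, h x) := Real.sqrt_mul hA _

end OAux

namespace OAux
variable {d : ℕ}

lemma hcs_comp {v : (Fin d → ℝ) → Fin d → ℝ} (hv : HasCompactSupport v) (i : Fin d) :
    HasCompactSupport (fun y => v y i) :=
  HasCompactSupport.intro hv (fun x hx => comp_zero_of_nmem hx i)

lemma symGrad_smooth {v : (Fin d → ℝ) → Fin d → ℝ} (hv : ContDiff ℝ (⊤ : ℕ∞) v) (i j : Fin d) :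
    ContDiff ℝ (⊤ : ℕ∞) (fun x => symGrad v x i j) := by
  unfold symGrad
  exact ((contDiff_pder (comp_smooth hv i) j).add (contDiff_pder (comp_smooth hv j) i)).div_const 2

lemma visc_entry_smooth {ν : ℝ} {v : (Fin d → ℝ) → Fin d → ℝ} (hv : ContDiff ℝ (⊤ : ℕ∞) v) (i j : Fin d) :
    ContDiff ℝ (⊤ : ℕ∞) (fun y => 2 * ν * symGrad v y i j) :=
  contDiff_const.mul (symGrad_smooth hv i j)

lemma cont_symGrad {v : (Fin d → ℝ) → Fin d → ℝ} (hv : ContDiff ℝ (⊤ : ℕ∞) v) (i j : Fin d) :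
    Continuous (fun x => symGrad v x i j) := (symGrad_smooth hv i j).continuous

lemma cont_divVisc {ν : ℝ} {v : (Fin d → ℝ) → Fin d → ℝ} (hv : ContDiff ℝ (⊤ : ℕ∞) v) (i : Fin d) :
    Continuous (fun x => divVisc ν v x i) := by
  unfold divVisc
  exact continuous_finset_sum _ (fun j _ => cont_pder (visc_entry_smooth hv i j) j)

lemma cont_adv {a v : (Fin d → ℝ) → Fin d → ℝ} (ha : ContDiff ℝ (⊤ : ℕ∞) a) (hv : ContDiff ℝ (⊤ : ℕ∞) v)
    (i : Fin d) : Continuous (fun x => adv a v x i) := by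
  unfold adv
  exact continuous_finset_sum _ (fun j _ =>
    ((comp_smooth ha j).continuous).mul (cont_pder (comp_smooth hv i) j))

lemma cont_grd {q : (Fin d → ℝ) → ℝ} (hq : ContDiff ℝ (⊤ : ℕ∞) q) (i : Fin d) :
    Continuous (fun x => grd q x i) := cont_pder hq i

lemma symGrad_zero {v : (Fin d → ℝ) → Fin d → ℝ} {x : Fin d → ℝ} (hx : x ∉ tsupport v)
    (i j : Fin d) : symGrad v x i j = 0 := by
  unfold symGrad
  rw [pder_comp_zero_of_nmem hx, pder_comp_zero_of_nmem hx]; norm_num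

lemma divVisc_zero {ν : ℝ} {v : (Fin d → ℝ) → Fin d → ℝ} {x : Fin d → ℝ} (hx : x ∉ tsupport v)
    (i : Fin d) : divVisc ν v x i = 0 := by
  unfold divVisc
  refine Finset.sum_eq_zero (fun j _ => ?_)
  refine pder_zero_of_nmem (fun h => hx ?_) j
  refine closure_minimal ?_ (isClosed_tsupport v) h
  intro y hy
  simp only [Function.mem_support] at hy
  by_contra hyn
  exact hy (by rw [symGrad_zero hyn i j, mul_zero])

lemma adv_zero {a v : (Fin d → ℝ) → Fin d → ℝ} {x : Fin d → ℝ} (hx : x ∉ tsupport v)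
    (i : Fin d) : adv a v x i = 0 := by
  unfold adv
  exact Finset.sum_eq_zero (fun j _ => by rw [pder_comp_zero_of_nmem hx, mul_zero])

lemma grd_zero {q : (Fin d → ℝ) → ℝ} {x : Fin d → ℝ} (hx : x ∉ tsupport q) (i : Fin d) :
    grd q x i = 0 := pder_zero_of_nmem hx i

lemma comp_add_eq {v w : (Fin d → ℝ) → Fin d → ℝ} (i : Fin d) :
    (fun y => (v + w) y i) = (fun y => v y i + w y i) := rfl

lemma adv_add {a v w : (Fin d → ℝ) → Fin d → ℝ} (hv : ContDiff ℝ (⊤ : ℕ∞) v) (hw : ContDiff ℝ (⊤ : ℕ∞) w)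
    (x : Fin d → ℝ) (i : Fin d) : adv a (v + w) x i = adv a v x i + adv a w x i := by
  unfold adv
  rw [← Finset.sum_add_distrib]
  refine Finset.sum_congr rfl (fun j _ => ?_)
  rw [comp_add_eq, pder_add (comp_smooth hv i) (comp_smooth hw i)]; ring

lemma grd_add {q r : (Fin d → ℝ) → ℝ} (hq : ContDiff ℝ (⊤ : ℕ∞) q) (hr : ContDiff ℝ (⊤ : ℕ∞) r)
    (x : Fin d → ℝ) (i : Fin d) : grd (q + r) x i = grd q x i + grd r x i := by
  unfold grd
  have : (q + r) = (fun y => q y + r y) := rfl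
  rw [this, pder_add hq hr]

lemma symGrad_add {v w : (Fin d → ℝ) → Fin d → ℝ} (hv : ContDiff ℝ (⊤ : ℕ∞) v) (hw : ContDiff ℝ (⊤ : ℕ∞) w)
    (x : Fin d → ℝ) (i j : Fin d) : symGrad (v + w) x i j = symGrad v x i j + symGrad w x i j := by
  unfold symGrad
  rw [comp_add_eq, comp_add_eq, pder_add (comp_smooth hv i) (comp_smooth hw i),
    pder_add (comp_smooth hv j) (comp_smooth hw j)]
  ring

lemma divVisc_add {ν : ℝ} {v w : (Fin d → ℝ) → Fin d → ℝ} (hv : ContDiff ℝ (⊤ : ℕ∞) v)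
    (hw : ContDiff ℝ (⊤ : ℕ∞) w) (x : Fin d → ℝ) (i : Fin d) :
    divVisc ν (v + w) x i = divVisc ν v x i + divVisc ν w x i := by
  unfold divVisc
  rw [← Finset.sum_add_distrib]
  refine Finset.sum_congr rfl (fun j _ => ?_)
  have e : (fun y => 2 * ν * symGrad (v + w) y i j)
      = (fun y => 2 * ν * symGrad v y i j + 2 * ν * symGrad w y i j) :=
    funext fun y => by rw [symGrad_add hv hw y i j]; ring
  rw [e, pder_add (visc_entry_smooth hv i j) (visc_entry_smooth hw i j)]

lemma vdiv_sub {v w : (Fin d → ℝ) → Fin d → ℝ} (hv : ContDiff ℝ (⊤ : ℕ∞) v) (hw : ContDiff ℝ (⊤ : ℕ∞) w)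
    (x : Fin d → ℝ) : vdiv (v - w) x = vdiv v x - vdiv w x := by
  unfold vdiv
  rw [← Finset.sum_sub_distrib]
  refine Finset.sum_congr rfl (fun i _ => ?_)
  have e : (fun y => (v - w) y i) = (fun y => v y i - w y i) := rfl
  rw [e, pder_sub (comp_smooth hv i) (comp_smooth hw i)]

lemma ibp3 {f g h : (Fin d → ℝ) → ℝ} (hf : ContDiff ℝ (⊤ : ℕ∞) f) (hg : ContDiff ℝ (⊤ : ℕ∞) g)
    (hgc : HasCompactSupport g) (hh : ContDiff ℝ (⊤ : ℕ∞) h) (hhc : HasCompactSupport h) (j : Fin d) :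
    (∫ x, f x * pder g j x * h x) + (∫ x, f x * g x * pder h j x)
      = - ∫ x, pder f j x * g x * h x := by
  have hG : ContDiff ℝ (⊤ : ℕ∞) (fun x => g x * h x) := hg.mul hh
  have hGc : HasCompactSupport (fun x => g x * h x) :=
    HasCompactSupport.intro hgc (fun x hx => by rw [image_eq_zero_of_notMem_tsupport hx, zero_mul])
  have key := ibp_mul hf hG hGc j
  have e1 : (fun x => f x * pder (fun x => g x * h x) j x)
      = (fun x => f x * pder g j x * h x + f x * g x * pder h j x) :=
    funext fun x => by rw [pder_mul hg hh j x]; ring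
  have e2 : (fun x => pder f j x * (g x * h x)) = (fun x => pder f j x * g x * h x) :=
    funext fun x => by ring
  rw [e1, e2] at key
  have i1 : Integrable (fun x => f x * pder g j x * h x) :=
    integ ((hf.continuous.mul (cont_pder hg j)).mul hh.continuous) hhc
      (fun x hx => by rw [image_eq_zero_of_notMem_tsupport hx, mul_zero])
  have i2 : Integrable (fun x => f x * g x * pder h j x) :=
    integ ((hf.continuous.mul hg.continuous).mul (cont_pder hh j)) hgc
      (fun x hx => by rw [image_eq_zero_of_notMem_tsupport hx, mul_zero, zero_mul])
  rw [integral_add i1 i2] at key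
  linarith [key]

end OAux

namespace OAux
variable {d : ℕ}

lemma int_cterm {a v₁ v₂ : (Fin d → ℝ) → Fin d → ℝ} (ha : ContDiff ℝ (⊤ : ℕ∞) a)
    (hv₁ : ContDiff ℝ (⊤ : ℕ∞) v₁) (hv₂ : ContDiff ℝ (⊤ : ℕ∞) v₂) (hv₂c : HasCompactSupport v₂) (i j : Fin d) :
    Integrable (fun x => a x j * pder (fun y => v₁ y i) j x * v₂ x i) :=
  integ (((comp_smooth ha j).continuous.mul (cont_pder (comp_smooth hv₁ i) j)).mul
      (comp_smooth hv₂ i).continuous) hv₂c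
    (fun x hx => by rw [comp_zero_of_nmem hx, mul_zero])

lemma convc_expand {a v₁ v₂ : (Fin d → ℝ) → Fin d → ℝ} (ha : ContDiff ℝ (⊤ : ℕ∞) a)
    (hv₁ : ContDiff ℝ (⊤ : ℕ∞) v₁) (hv₂ : ContDiff ℝ (⊤ : ℕ∞) v₂) (hv₂c : HasCompactSupport v₂) :
    convc a v₁ v₂ = ∑ i, ∑ j, ∫ x, a x j * pder (fun y => v₁ y i) j x * v₂ x i := by
  unfold convc
  have e : (fun x => ∑ i, adv a v₁ x i * v₂ x i)
      = fun x => ∑ i, ∑ j, a x j * pder (fun y => v₁ y i) j x * v₂ x i :=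
    funext fun x => Finset.sum_congr rfl (fun i _ => by unfold adv; rw [Finset.sum_mul])
  rw [e, integral_finset_sum _ (fun i _ =>
    integrable_finset_sum _ (fun j _ => int_cterm ha hv₁ hv₂ hv₂c i j))]
  exact Finset.sum_congr rfl (fun i _ =>
    integral_finset_sum _ (fun j _ => int_cterm ha hv₁ hv₂ hv₂c i j))

lemma convc_add_eq_zero {a v₁ v₂ : (Fin d → ℝ) → Fin d → ℝ} (ha : ContDiff ℝ (⊤ : ℕ∞) a)
    (hdiva : ∀ x, vdiv a x = 0)
    (hv₁ : ContDiff ℝ (⊤ : ℕ∞) v₁) (hv₁c : HasCompactSupport v₁)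
    (hv₂ : ContDiff ℝ (⊤ : ℕ∞) v₂) (hv₂c : HasCompactSupport v₂) :
    convc a v₁ v₂ + convc a v₂ v₁ = 0 := by
  rw [convc_expand ha hv₁ hv₂ hv₂c, convc_expand ha hv₂ hv₁ hv₁c,
    ← Finset.sum_add_distrib]
  refine Finset.sum_eq_zero (fun i _ => ?_)
  rw [← Finset.sum_add_distrib]
  have step : ∀ j : Fin d,
      (∫ x, a x j * pder (fun y => v₁ y i) j x * v₂ x i)
        + (∫ x, a x j * pder (fun y => v₂ y i) j x * v₁ x i)
      = - ∫ x, pder (fun y => a y j) j x * v₁ x i * v₂ x i := by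
    intro j
    have key := ibp3 (comp_smooth ha j) (comp_smooth hv₁ i)
      (hcs_comp hv₁c i) (comp_smooth hv₂ i) (hcs_comp hv₂c i) j
    have e2 : (fun x => a x j * v₁ x i * pder (fun y => v₂ y i) j x)
        = (fun x => a x j * pder (fun y => v₂ y i) j x * v₁ x i) := funext fun x => by ring
    rw [e2] at key
    exact key
  rw [Finset.sum_congr rfl (fun j _ => step j)]
  rw [Finset.sum_neg_distrib, ← integral_finset_sum _ (fun j _ =>
    integ (F := fun x => pder (fun y => a y j) j x * v₁ x i * v₂ x i)
      ((cont_pder (comp_smooth ha j) j |>.mul (comp_smooth hv₁ i).continuous).mul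
        (comp_smooth hv₂ i).continuous) hv₂c
      (fun x hx => by rw [comp_zero_of_nmem hx, mul_zero]))]
  have e3 : (fun x => ∑ j, pder (fun y => a y j) j x * v₁ x i * v₂ x i)
      = (fun _ => (0 : ℝ)) := by
    funext x
    have : ∑ j, pder (fun y => a y j) j x * v₁ x i * v₂ x i
        = (vdiv a x) * (v₁ x i * v₂ x i) := by
      unfold vdiv; rw [Finset.sum_mul]; exact Finset.sum_congr rfl (fun j _ => by ring)
    rw [this, hdiva, zero_mul]
  rw [e3]
  simp

lemma convc_self_eq_zero {a v : (Fin d → ℝ) → Fin d → ℝ} (ha : ContDiff ℝ (⊤ : ℕ∞) a)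
    (hdiva : ∀ x, vdiv a x = 0) (hv : ContDiff ℝ (⊤ : ℕ∞) v) (hvc : HasCompactSupport v) :
    convc a v v = 0 := by
  have := convc_add_eq_zero ha hdiva hv hvc hv hvc
  linarith

lemma grd_dot_zero {q : (Fin d → ℝ) → ℝ} {v : (Fin d → ℝ) → Fin d → ℝ}
    (hq : ContDiff ℝ (⊤ : ℕ∞) q) (hqc : HasCompactSupport q)
    (hv : ContDiff ℝ (⊤ : ℕ∞) v) (hvc : HasCompactSupport v) (hdv : ∀ x, vdiv v x = 0) :
    ∫ x, ∑ i, grd q x i * v x i = 0 := by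
  rw [integral_finset_sum _ (fun i _ =>
    integ (F := fun x => grd q x i * v x i) ((cont_grd hq i).mul (comp_smooth hv i).continuous) hqc
      (fun x hx => by rw [grd_zero hx, zero_mul]))]
  have step : ∀ i : Fin d, (∫ x, grd q x i * v x i)
      = - ∫ x, pder (fun y => v y i) i x * q x := by
    intro i
    have e : (fun x => grd q x i * v x i) = (fun x => v x i * pder q i x) :=
      funext fun x => by unfold grd; ring
    rw [e]
    exact ibp_mul (comp_smooth hv i) hq hqc i
  rw [Finset.sum_congr rfl (fun i _ => step i), Finset.sum_neg_distrib,
    ← integral_finset_sum _ (fun i _ =>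
      integ (F := fun x => pder (fun y => v y i) i x * q x)
        ((cont_pder (comp_smooth hv i) i).mul hq.continuous) hqc
        (fun x hx => by rw [image_eq_zero_of_notMem_tsupport hx, mul_zero]))]
  have e3 : (fun x => ∑ i, pder (fun y => v y i) i x * q x) = (fun _ => (0:ℝ)) := by
    funext x
    have : ∑ i, pder (fun y => v y i) i x * q x = (vdiv v x) * q x := by
      unfold vdiv; rw [Finset.sum_mul]
    rw [this, hdv, zero_mul]
  rw [e3]
  simp

end OAux

namespace OAux
variable {d : ℕ}

lemma ssum_split3 {n : ℕ} (F G H : Fin n → ℝ) (su uu : ℝ) :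
    ∑ i, (F i + G i * su + H i * uu)
      = (∑ i, F i) + (∑ i, G i) * su + (∑ i, H i) * uu := by
  rw [Finset.sum_add_distrib, Finset.sum_add_distrib, ← Finset.sum_mul, ← Finset.sum_mul]

lemma dsum_split3 {n : ℕ} (F G H : Fin n → Fin n → ℝ) (su uu : ℝ) :
    ∑ i, ∑ j, (F i j + G i j * su + H i j * uu)
      = (∑ i, ∑ j, F i j) + (∑ i, ∑ j, G i j) * su + (∑ i, ∑ j, H i j) * uu := by
  calc ∑ i, ∑ j, (F i j + G i j * su + H i j * uu)
      = ∑ i, ((∑ j, F i j) + (∑ j, G i j) * su + (∑ j, H i j) * uu) :=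
        Finset.sum_congr rfl fun i _ => ssum_split3 _ _ _ _ _
    _ = _ := ssum_split3 _ _ _ _ _

lemma quad2_nonneg {n : ℕ} (c t : ℝ) (hc : 0 ≤ c) (A B : Fin n → Fin n → ℝ) :
    0 ≤ (∑ i, ∑ j, c * B i j * B i j) * (t * t) + 2 * (∑ i, ∑ j, c * A i j * B i j) * t
        + ∑ i, ∑ j, c * A i j * A i j := by
  have key : ∑ i, ∑ j, c * ((A i j + t * B i j) * (A i j + t * B i j))
      = (∑ i, ∑ j, c * A i j * A i j) + (∑ i, ∑ j, c * A i j * B i j) * (2 * t)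
        + (∑ i, ∑ j, c * B i j * B i j) * (t * t) := by
    calc ∑ i, ∑ j, c * ((A i j + t * B i j) * (A i j + t * B i j))
        = ∑ i, ∑ j, (c * A i j * A i j + (c * A i j * B i j) * (2 * t)
            + (c * B i j * B i j) * (t * t)) :=
          Finset.sum_congr rfl fun i _ => Finset.sum_congr rfl fun j _ => by ring
      _ = _ := dsum_split3 _ _ _ _ _
  have pos : 0 ≤ ∑ i, ∑ j, c * ((A i j + t * B i j) * (A i j + t * B i j)) :=
    Finset.sum_nonneg fun i _ => Finset.sum_nonneg fun j _ =>
      mul_nonneg hc (mul_self_nonneg _)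
  rw [key] at pos
  linarith

lemma quad1_nonneg {n : ℕ} (c t : ℝ) (hc : 0 ≤ c) (A B : Fin n → ℝ) :
    0 ≤ (c * ∑ i, B i * B i) * (t * t) + 2 * (c * ∑ i, A i * B i) * t
        + c * ∑ i, A i * A i := by
  have key : ∑ i, ((A i + t * B i) * (A i + t * B i))
      = (∑ i, A i * A i) + (∑ i, A i * B i) * (2 * t) + (∑ i, B i * B i) * (t * t) :=
    calc ∑ i, ((A i + t * B i) * (A i + t * B i))
        = ∑ i, (A i * A i + (A i * B i) * (2 * t) + (B i * B i) * (t * t)) :=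
          Finset.sum_congr rfl fun i _ => by ring
      _ = _ := ssum_split3 _ _ _ _ _
  have pos : 0 ≤ c * ∑ i, ((A i + t * B i) * (A i + t * B i)) :=
    mul_nonneg hc (Finset.sum_nonneg fun i _ => mul_self_nonneg _)
  have e : (c * ∑ i, B i * B i) * (t * t) + 2 * (c * ∑ i, A i * B i) * t
        + c * ∑ i, A i * A i
      = c * ((∑ i, A i * A i) + (∑ i, A i * B i) * (2 * t) + (∑ i, B i * B i) * (t * t)) := by
    ring
  rw [e, ← key]
  exact pos

lemma quadw_nonneg {n : ℕ} (c t : ℝ) (hc : 0 < c) (A B : Fin n → ℝ) :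
    0 ≤ (c * ∑ i, B i * B i) * (t * t) + 2 * (∑ i, A i * B i) * t
        + c⁻¹ * ∑ i, A i * A i := by
  have key : ∑ i, ((A i + (t * c) * B i) * (A i + (t * c) * B i))
      = (∑ i, A i * A i) + (∑ i, A i * B i) * (2 * (t * c)) + (∑ i, B i * B i) * (t * c * (t * c)) :=
    calc ∑ i, ((A i + (t * c) * B i) * (A i + (t * c) * B i))
        = ∑ i, (A i * A i + (A i * B i) * (2 * (t * c)) + (B i * B i) * (t * c * (t * c))) :=
          Finset.sum_congr rfl fun i _ => by ring
      _ = _ := ssum_split3 _ _ _ _ _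
  have pos : 0 ≤ c⁻¹ * ∑ i, ((A i + (t * c) * B i) * (A i + (t * c) * B i)) :=
    mul_nonneg (inv_nonneg.mpr hc.le) (Finset.sum_nonneg fun i _ => mul_self_nonneg _)
  rw [key] at pos
  have e : (c * ∑ i, B i * B i) * (t * t) + 2 * (∑ i, A i * B i) * t
        + c⁻¹ * ∑ i, A i * A i
      = c⁻¹ * ((∑ i, A i * A i) + (∑ i, A i * B i) * (2 * (t * c)) + (∑ i, B i * B i) * (t * c * (t * c))) := by
    field_simp
    ring
  rw [e]
  exact pos

lemma int_comb3 {f g h : (Fin d → ℝ) → ℝ} (hf : Integrable f) (hg : Integrable g)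
    (hh : Integrable h) (su uu : ℝ) :
    ∫ x, (f x + g x * su + h x * uu) = (∫ x, f x) + (∫ x, g x) * su + (∫ x, h x) * uu := by
  have i1 : ∫ x, (f x + g x * su + h x * uu)
      = (∫ x, (f x + g x * su)) + ∫ x, h x * uu :=
    integral_add (hf.add (hg.mul_const su)) (hh.mul_const uu)
  have i2 : ∫ x, (f x + g x * su) = (∫ x, f x) + ∫ x, g x * su :=
    integral_add hf (hg.mul_const su)
  rw [i1, i2, integral_mul_const, integral_mul_const]

end OAux

namespace OAux
variable {d : ℕ}

/-- The field `a·∇v + ∇q`. -/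
def Sf (a v : (Fin d → ℝ) → Fin d → ℝ) (q : (Fin d → ℝ) → ℝ) (x : Fin d → ℝ) (i : Fin d) : ℝ :=
  adv a v x i + grd q x i

lemma cont_Sf {a v : (Fin d → ℝ) → Fin d → ℝ} {q : (Fin d → ℝ) → ℝ} (ha : ContDiff ℝ (⊤ : ℕ∞) a)
    (hv : ContDiff ℝ (⊤ : ℕ∞) v) (hq : ContDiff ℝ (⊤ : ℕ∞) q) (i : Fin d) :
    Continuous (fun x => Sf a v q x i) := (cont_adv ha hv i).add (cont_grd hq i)

lemma Sf_zero {a v : (Fin d → ℝ) → Fin d → ℝ} {q : (Fin d → ℝ) → ℝ} {x : Fin d → ℝ}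
    (hx : x ∉ tsupport v ∪ tsupport q) (i : Fin d) : Sf a v q x i = 0 := by
  simp only [Set.mem_union] at hx
  push_neg at hx
  unfold Sf
  rw [adv_zero hx.1, grd_zero hx.2, add_zero]

lemma int_sgI {ν : ℝ} {v w : (Fin d → ℝ) → Fin d → ℝ} (hv : ContDiff ℝ (⊤ : ℕ∞) v)
    (hw : ContDiff ℝ (⊤ : ℕ∞) w) (hwc : HasCompactSupport w) :
    Integrable (fun x => ∑ i, ∑ j, 2 * ν * symGrad v x i j * symGrad w x i j) :=
  integ (continuous_finset_sum _ fun i _ => continuous_finset_sum _ fun j _ =>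
      (continuous_const.mul (cont_symGrad hv i j)).mul (cont_symGrad hw i j)) hwc
    (fun x hx => Finset.sum_eq_zero fun i _ => Finset.sum_eq_zero fun j _ => by
      rw [symGrad_zero hx, mul_zero])

lemma int_wdotF {τ : (Fin d → ℝ) → ℝ} {F G : (Fin d → ℝ) → Fin d → ℝ} {K : Set (Fin d → ℝ)}
    (hτ : Continuous τ) (hF : ∀ i, Continuous (fun x => F x i))
    (hG : ∀ i, Continuous (fun x => G x i)) (hK : IsCompact K)
    (h0 : ∀ x ∉ K, ∀ i, F x i * G x i = 0) :
    Integrable (fun x => τ x * ∑ i, F x i * G x i) :=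
  integ (hτ.mul (continuous_finset_sum _ fun i _ => (hF i).mul (hG i))) hK
    (fun x hx => by rw [Finset.sum_eq_zero (fun i _ => h0 x hx i), mul_zero])

lemma int_dotF {F G : (Fin d → ℝ) → Fin d → ℝ} {K : Set (Fin d → ℝ)}
    (hF : ∀ i, Continuous (fun x => F x i))
    (hG : ∀ i, Continuous (fun x => G x i)) (hK : IsCompact K)
    (h0 : ∀ x ∉ K, ∀ i, F x i * G x i = 0) :
    Integrable (fun x => ∑ i, F x i * G x i) :=
  integ (continuous_finset_sum _ fun i _ => (hF i).mul (hG i)) hK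
    (fun x hx => Finset.sum_eq_zero (fun i _ => h0 x hx i))

lemma tnormSq_eq (ν : ℝ) (a : (Fin d → ℝ) → Fin d → ℝ) (τ : (Fin d → ℝ) → ℝ)
    (v : (Fin d → ℝ) → Fin d → ℝ) (q : (Fin d → ℝ) → ℝ) :
    tnormSq ν a τ v q = kvisc ν v v + ∫ x, τ x * ∑ i, Sf a v q x i * Sf a v q x i := by
  unfold tnormSq
  congr 1
  refine congrArg _ (funext fun x => ?_)
  refine congrArg _ (Finset.sum_congr rfl fun i _ => ?_)
  rw [pow_two]; rfl

lemma kvisc_self_nonneg {ν : ℝ} (hν : 0 ≤ ν) (v : (Fin d → ℝ) → Fin d → ℝ) :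
    0 ≤ kvisc ν v v :=
  integral_nonneg fun x => Finset.sum_nonneg fun i _ => Finset.sum_nonneg fun j _ => by
    nlinarith [mul_self_nonneg (symGrad v x i j)]

lemma wdot_self_nonneg {τ : (Fin d → ℝ) → ℝ} (hτ0 : ∀ x, 0 ≤ τ x)
    (F : (Fin d → ℝ) → Fin d → ℝ) :
    0 ≤ ∫ x, τ x * ∑ i, F x i * F x i :=
  integral_nonneg fun x => mul_nonneg (hτ0 x)
    (Finset.sum_nonneg fun i _ => mul_self_nonneg _)

lemma tnormSq_nonneg {ν : ℝ} (hν : 0 ≤ ν) {τ : (Fin d → ℝ) → ℝ} (hτ0 : ∀ x, 0 ≤ τ x)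
    (a v : _) (q : (Fin d → ℝ) → ℝ) : 0 ≤ tnormSq ν a τ v q := by
  rw [tnormSq_eq]
  exact add_nonneg (kvisc_self_nonneg hν v) (wdot_self_nonneg hτ0 _)

lemma tnorm_sq' {ν : ℝ} (hν : 0 ≤ ν) {τ : (Fin d → ℝ) → ℝ} (hτ0 : ∀ x, 0 ≤ τ x)
    (a v : _) (q : (Fin d → ℝ) → ℝ) :
    tnorm ν a τ v q * tnorm ν a τ v q = tnormSq ν a τ v q :=
  Real.mul_self_sqrt (tnormSq_nonneg hν hτ0 a v q)

lemma tnormPlusSq_eq (ν : ℝ) (a : (Fin d → ℝ) → Fin d → ℝ) (τ : (Fin d → ℝ) → ℝ)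
    (v : (Fin d → ℝ) → Fin d → ℝ) (q : (Fin d → ℝ) → ℝ) :
    tnormPlusSq ν a τ v q = tnormSq ν a τ v q
      + (∫ x, τ x * ∑ i, divVisc ν v x i * divVisc ν v x i)
      + ∫ x, (τ x)⁻¹ * ∑ i, v x i * v x i := by
  unfold tnormPlusSq
  congr 1
  · congr 1
    refine congrArg _ (funext fun x => ?_)
    refine congrArg _ (Finset.sum_congr rfl fun i _ => pow_two _)
  · refine congrArg _ (funext fun x => ?_)
    refine congrArg _ (Finset.sum_congr rfl fun i _ => pow_two _)

lemma tnorm_le_tnormPlus {ν : ℝ} (hν : 0 ≤ ν) {τ : (Fin d → ℝ) → ℝ} (hτ0 : ∀ x, 0 < τ x)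
    (a v : _) (q : (Fin d → ℝ) → ℝ) :
    tnorm ν a τ v q ≤ tnormPlus ν a τ v q := by
  apply Real.sqrt_le_sqrt
  rw [tnormPlusSq_eq]
  have h1 : 0 ≤ ∫ x, τ x * ∑ i, divVisc ν v x i * divVisc ν v x i :=
    wdot_self_nonneg (fun x => (hτ0 x).le) _
  have h2 : 0 ≤ ∫ x, (τ x)⁻¹ * ∑ i, v x i * v x i :=
    integral_nonneg fun x => mul_nonneg (inv_nonneg.mpr (hτ0 x).le)
      (Finset.sum_nonneg fun i _ => mul_self_nonneg _)
  linarith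

end OAux

namespace OAux
variable {d : ℕ} {ν : ℝ} {a : (Fin d → ℝ) → Fin d → ℝ} {τ : (Fin d → ℝ) → ℝ}
  {η z : (Fin d → ℝ) → Fin d → ℝ} {ρ s : (Fin d → ℝ) → ℝ}

lemma cs12 (hν : 0 < ν) (ha : ContDiff ℝ (⊤ : ℕ∞) a) (hτ : Continuous τ) (hτ0 : ∀ x, 0 < τ x)
    (hη : ContDiff ℝ (⊤ : ℕ∞) η) (hηc : HasCompactSupport η)
    (hρ : ContDiff ℝ (⊤ : ℕ∞) ρ) (hρc : HasCompactSupport ρ)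
    (hz : ContDiff ℝ (⊤ : ℕ∞) z) (hzc : HasCompactSupport z)
    (hs : ContDiff ℝ (⊤ : ℕ∞) s) (hsc : HasCompactSupport s) :
    |kvisc ν η z + ∫ x, τ x * ∑ i, Sf a η ρ x i * Sf a z s x i|
      ≤ tnorm ν a τ η ρ * tnorm ν a τ z s := by
  have hKη : IsCompact (tsupport η ∪ tsupport ρ : Set _) := hηc.union hρc
  have hKz : IsCompact (tsupport z ∪ tsupport s : Set _) := hzc.union hsc
  have i_f1 : Integrable (fun x => ∑ i, ∑ j, 2*ν*symGrad η x i j*symGrad η x i j) :=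
    int_sgI hη hη hηc
  have i_f2 : Integrable (fun x => ∑ i, ∑ j, 2*ν*symGrad η x i j*symGrad z x i j) :=
    int_sgI hη hz hzc
  have i_f3 : Integrable (fun x => ∑ i, ∑ j, 2*ν*symGrad z x i j*symGrad z x i j) :=
    int_sgI hz hz hzc
  have i_g1 : Integrable (fun x => τ x * ∑ i, Sf a η ρ x i * Sf a η ρ x i) :=
    int_wdotF hτ (cont_Sf ha hη hρ) (cont_Sf ha hη hρ) hKη
      (fun x hx i => by rw [Sf_zero hx, mul_zero])
  have i_g2 : Integrable (fun x => τ x * ∑ i, Sf a η ρ x i * Sf a z s x i) :=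
    int_wdotF hτ (cont_Sf ha hη hρ) (cont_Sf ha hz hs) hKz
      (fun x hx i => by rw [Sf_zero hx, mul_zero])
  have i_g3 : Integrable (fun x => τ x * ∑ i, Sf a z s x i * Sf a z s x i) :=
    int_wdotF hτ (cont_Sf ha hz hs) (cont_Sf ha hz hs) hKz
      (fun x hx i => by rw [Sf_zero hx, mul_zero])
  have key := cs_int (f := fun x => (∑ i, ∑ j, 2*ν*symGrad η x i j*symGrad η x i j)
        + τ x * ∑ i, Sf a η ρ x i * Sf a η ρ x i)
      (g := fun x => (∑ i, ∑ j, 2*ν*symGrad η x i j*symGrad z x i j)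
        + τ x * ∑ i, Sf a η ρ x i * Sf a z s x i)
      (h := fun x => (∑ i, ∑ j, 2*ν*symGrad z x i j*symGrad z x i j)
        + τ x * ∑ i, Sf a z s x i * Sf a z s x i)
      (i_f1.add i_g1) (i_f2.add i_g2) (i_f3.add i_g3)
      (fun x => add_nonneg
        (Finset.sum_nonneg fun i _ => Finset.sum_nonneg fun j _ => by
          nlinarith [mul_self_nonneg (symGrad η x i j)])
        (mul_nonneg (hτ0 x).le (Finset.sum_nonneg fun i _ => mul_self_nonneg _)))
      (fun x => add_nonneg
        (Finset.sum_nonneg fun i _ => Finset.sum_nonneg fun j _ => by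
          nlinarith [mul_self_nonneg (symGrad z x i j)])
        (mul_nonneg (hτ0 x).le (Finset.sum_nonneg fun i _ => mul_self_nonneg _)))
      (fun t x => by
        have q2 := quad2_nonneg (2*ν) t (by linarith) (fun i j => symGrad η x i j)
          (fun i j => symGrad z x i j)
        have q1 := quad1_nonneg (τ x) t (hτ0 x).le (fun i => Sf a η ρ x i)
          (fun i => Sf a z s x i)
        nlinarith [q2, q1])
  rw [integral_add i_f1 i_g1, integral_add i_f2 i_g2, integral_add i_f3 i_g3] at key
  have e1 : (∫ x, ∑ i, ∑ j, 2*ν*symGrad η x i j*symGrad η x i j)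
      + (∫ x, τ x * ∑ i, Sf a η ρ x i * Sf a η ρ x i) = tnormSq ν a τ η ρ :=
    (tnormSq_eq ν a τ η ρ).symm
  have e3 : (∫ x, ∑ i, ∑ j, 2*ν*symGrad z x i j*symGrad z x i j)
      + (∫ x, τ x * ∑ i, Sf a z s x i * Sf a z s x i) = tnormSq ν a τ z s :=
    (tnormSq_eq ν a τ z s).symm
  rw [e1, e3] at key
  exact key

lemma coerc (hν : 0 < ν) (ha : ContDiff ℝ (⊤ : ℕ∞) a) (hdiva : ∀ x, vdiv a x = 0)
    (hτ : Continuous τ) (hτ0 : ∀ x, 0 < τ x)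
    (hz : ContDiff ℝ (⊤ : ℕ∞) z) (hzc : HasCompactSupport z)
    (hs : ContDiff ℝ (⊤ : ℕ∞) s) (hsc : HasCompactSupport s)
    (hinvz : (∫ x, τ x * ∑ i, (divVisc ν z x i)^2) ≤ ∫ x, ∑ i, ∑ j, 2*ν*(symGrad z x i j)^2) :
    tnormSq ν a τ z s ≤ 2 * Ared ν a τ z s z s := by
  have hKz : IsCompact (tsupport z ∪ tsupport s : Set _) := hzc.union hsc
  have hnz : ∀ x, x ∉ (tsupport z ∪ tsupport s : Set _) → x ∉ tsupport z :=
    fun x hx h => hx (Set.mem_union_left _ h)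
  have i_g : Integrable (fun x => τ x * ∑ i, Sf a z s x i * Sf a z s x i) :=
    int_wdotF hτ (cont_Sf ha hz hs) (cont_Sf ha hz hs) hKz
      (fun x hx i => by rw [Sf_zero hx, mul_zero])
  have i_p : Integrable (fun x => τ x * ∑ i, divVisc ν z x i * Sf a z s x i) :=
    int_wdotF hτ (fun i => cont_divVisc hz i) (cont_Sf ha hz hs) hKz
      (fun x hx i => by rw [Sf_zero hx, mul_zero])
  have i_j : Integrable (fun x => τ x * ∑ i, divVisc ν z x i * divVisc ν z x i) :=
    int_wdotF hτ (fun i => cont_divVisc hz i) (fun i => cont_divVisc hz i) hKz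
      (fun x hx i => by rw [divVisc_zero (hnz x hx), zero_mul])
  -- identity for Ared
  have est : (fun x => τ x * ∑ i, (adv a z x i - divVisc ν z x i + grd s x i)
        * (adv a z x i + grd s x i))
      = fun x => (τ x * ∑ i, Sf a z s x i * Sf a z s x i)
        - τ x * ∑ i, divVisc ν z x i * Sf a z s x i := by
    funext x
    have hsum : ∑ i, (adv a z x i - divVisc ν z x i + grd s x i) * (adv a z x i + grd s x i)
        = (∑ i, Sf a z s x i * Sf a z s x i) - ∑ i, divVisc ν z x i * Sf a z s x i := by
      rw [← Finset.sum_sub_distrib]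
      exact Finset.sum_congr rfl fun i _ => by unfold Sf; ring
    rw [hsum, mul_sub]
  have hared : Ared ν a τ z s z s = kvisc ν z z
      + ((∫ x, τ x * ∑ i, Sf a z s x i * Sf a z s x i)
        - ∫ x, τ x * ∑ i, divVisc ν z x i * Sf a z s x i) := by
    unfold Ared
    rw [convc_self_eq_zero ha hdiva hz hzc, est, integral_sub i_g i_p]
    ring
  -- inverse estimate conversion
  have e1 : (∫ x, τ x * ∑ i, (divVisc ν z x i)^2)
      = ∫ x, τ x * ∑ i, divVisc ν z x i * divVisc ν z x i :=
    congrArg _ (funext fun x => congrArg _ (Finset.sum_congr rfl fun i _ => pow_two _))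
  have e2 : (∫ x, ∑ i, ∑ j, 2*ν*(symGrad z x i j)^2) = kvisc ν z z := by
    unfold kvisc
    exact congrArg _ (funext fun x => Finset.sum_congr rfl fun i _ =>
      Finset.sum_congr rfl fun j _ => by ring)
  rw [e1, e2] at hinvz
  -- Cauchy-Schwarz on the cross term
  have hcs := cs_int i_j i_p i_g
    (fun x => mul_nonneg (hτ0 x).le (Finset.sum_nonneg fun i _ => mul_self_nonneg _))
    (fun x => mul_nonneg (hτ0 x).le (Finset.sum_nonneg fun i _ => mul_self_nonneg _))
    (fun t x => by
      have q1 := quad1_nonneg (τ x) t (hτ0 x).le (fun i => divVisc ν z x i)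
        (fun i => Sf a z s x i)
      linarith [q1])
  set J := ∫ x, τ x * ∑ i, divVisc ν z x i * divVisc ν z x i with hJdef
  set G := ∫ x, τ x * ∑ i, Sf a z s x i * Sf a z s x i with hGdef
  set P := ∫ x, τ x * ∑ i, divVisc ν z x i * Sf a z s x i with hPdef
  set K := kvisc ν z z with hKdef
  have hJ0 : 0 ≤ J := wdot_self_nonneg (fun x => (hτ0 x).le) _
  have hG0 : 0 ≤ G := wdot_self_nonneg (fun x => (hτ0 x).le) _
  have hK0 : 0 ≤ K := kvisc_self_nonneg (by linarith) z
  have s1 : Real.sqrt J ≤ Real.sqrt K := Real.sqrt_le_sqrt hinvz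
  have s2 : Real.sqrt K * Real.sqrt G ≤ (K + G) / 2 := by
    nlinarith [Real.sq_sqrt hK0, Real.sq_sqrt hG0, sq_nonneg (Real.sqrt K - Real.sqrt G)]
  have hPb : P ≤ (K + G) / 2 := by
    have h1 : P ≤ |P| := le_abs_self P
    have h2 : Real.sqrt J * Real.sqrt G ≤ Real.sqrt K * Real.sqrt G :=
      mul_le_mul_of_nonneg_right s1 (Real.sqrt_nonneg G)
    linarith [hcs]
  rw [tnormSq_eq, hared]
  linarith

end OAux

namespace OAux
variable {d : ℕ} {ν : ℝ} {a : (Fin d → ℝ) → Fin d → ℝ} {τ : (Fin d → ℝ) → ℝ}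
  {η z : (Fin d → ℝ) → Fin d → ℝ} {ρ s : (Fin d → ℝ) → ℝ}

lemma Ared_split (ha : ContDiff ℝ (⊤ : ℕ∞) a) (hτ : Continuous τ)
    (hη : ContDiff ℝ (⊤ : ℕ∞) η) (hηc : HasCompactSupport η)
    (hρ : ContDiff ℝ (⊤ : ℕ∞) ρ) (hρc : HasCompactSupport ρ)
    (hz : ContDiff ℝ (⊤ : ℕ∞) z) (hzc : HasCompactSupport z)
    (hs : ContDiff ℝ (⊤ : ℕ∞) s) (hsc : HasCompactSupport s) :
    Ared ν a τ (η + z) (ρ + s) z s = Ared ν a τ η ρ z s + Ared ν a τ z s z s := by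
  have hKz : IsCompact (tsupport z ∪ tsupport s : Set _) := hzc.union hsc
  -- convection part
  have ic1 : Integrable (fun x => ∑ i, adv a η x i * z x i) :=
    int_dotF (F := fun x i => adv a η x i) (G := fun x i => z x i)
      (fun i => cont_adv ha hη i) (fun i => (comp_smooth hz i).continuous) hzc
      (fun x hx i => by rw [comp_zero_of_nmem hx, mul_zero])
  have ic2 : Integrable (fun x => ∑ i, adv a z x i * z x i) :=
    int_dotF (F := fun x i => adv a z x i) (G := fun x i => z x i)
      (fun i => cont_adv ha hz i) (fun i => (comp_smooth hz i).continuous) hzc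
      (fun x hx i => by rw [comp_zero_of_nmem hx, mul_zero])
  have hconv : convc a (η + z) z = convc a η z + convc a z z := by
    unfold convc
    have e : (fun x => ∑ i, adv a (η + z) x i * z x i)
        = fun x => (∑ i, adv a η x i * z x i) + ∑ i, adv a z x i * z x i := by
      funext x
      rw [← Finset.sum_add_distrib]
      exact Finset.sum_congr rfl fun i _ => by rw [adv_add hη hz]; ring
    rw [e, integral_add ic1 ic2]
  -- viscous part
  have ik1 : Integrable (fun x => ∑ i, ∑ j, 2*ν*symGrad η x i j*symGrad z x i j) :=
    int_sgI hη hz hzc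
  have ik2 : Integrable (fun x => ∑ i, ∑ j, 2*ν*symGrad z x i j*symGrad z x i j) :=
    int_sgI hz hz hzc
  have hvisc : kvisc ν (η + z) z = kvisc ν η z + kvisc ν z z := by
    unfold kvisc
    have e : (fun x => ∑ i, ∑ j, 2*ν*symGrad (η + z) x i j*symGrad z x i j)
        = fun x => (∑ i, ∑ j, 2*ν*symGrad η x i j*symGrad z x i j)
          + ∑ i, ∑ j, 2*ν*symGrad z x i j*symGrad z x i j := by
      funext x
      rw [← Finset.sum_add_distrib]
      refine Finset.sum_congr rfl fun i _ => ?_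
      rw [← Finset.sum_add_distrib]
      exact Finset.sum_congr rfl fun j _ => by rw [symGrad_add hη hz]; ring
    rw [e, integral_add ik1 ik2]
  -- stabilization part
  have ist1 : Integrable (fun x => τ x * ∑ i,
      (adv a η x i - divVisc ν η x i + grd ρ x i) * (adv a z x i + grd s x i)) :=
    int_wdotF hτ (F := fun x i => adv a η x i - divVisc ν η x i + grd ρ x i)
      (G := fun x i => adv a z x i + grd s x i)
      (fun i => ((cont_adv ha hη i).sub (cont_divVisc hη i)).add (cont_grd hρ i))
      (fun i => (cont_adv ha hz i).add (cont_grd hs i)) hKz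
      (fun x hx i => by
        simp only [Set.mem_union] at hx; push_neg at hx
        rw [adv_zero hx.1, grd_zero hx.2]; ring)
  have ist2 : Integrable (fun x => τ x * ∑ i,
      (adv a z x i - divVisc ν z x i + grd s x i) * (adv a z x i + grd s x i)) :=
    int_wdotF hτ (F := fun x i => adv a z x i - divVisc ν z x i + grd s x i)
      (G := fun x i => adv a z x i + grd s x i)
      (fun i => ((cont_adv ha hz i).sub (cont_divVisc hz i)).add (cont_grd hs i))
      (fun i => (cont_adv ha hz i).add (cont_grd hs i)) hKz
      (fun x hx i => by
        simp only [Set.mem_union] at hx; push_neg at hx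
        rw [adv_zero hx.1, grd_zero hx.2]; ring)
  have hstab : (∫ x, τ x * ∑ i, (adv a (η + z) x i - divVisc ν (η + z) x i
        + grd (ρ + s) x i) * (adv a z x i + grd s x i))
      = (∫ x, τ x * ∑ i, (adv a η x i - divVisc ν η x i + grd ρ x i)
          * (adv a z x i + grd s x i))
        + ∫ x, τ x * ∑ i, (adv a z x i - divVisc ν z x i + grd s x i)
          * (adv a z x i + grd s x i) := by
    have e : (fun x => τ x * ∑ i, (adv a (η + z) x i - divVisc ν (η + z) x i
          + grd (ρ + s) x i) * (adv a z x i + grd s x i))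
        = fun x => (τ x * ∑ i, (adv a η x i - divVisc ν η x i + grd ρ x i)
            * (adv a z x i + grd s x i))
          + τ x * ∑ i, (adv a z x i - divVisc ν z x i + grd s x i)
            * (adv a z x i + grd s x i) := by
      funext x
      rw [← mul_add, ← Finset.sum_add_distrib]
      refine congrArg _ (Finset.sum_congr rfl fun i _ => ?_)
      rw [adv_add hη hz, divVisc_add hη hz, grd_add hρ hs]
      ring
    rw [e, integral_add ist1 ist2]
  unfold Ared
  rw [hconv, hvisc, hstab]
  ring

lemma Ared_bound (hν : 0 < ν) (ha : ContDiff ℝ (⊤ : ℕ∞) a) (hdiva : ∀ x, vdiv a x = 0)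
    (hτ : Continuous τ) (hτ0 : ∀ x, 0 < τ x)
    (hη : ContDiff ℝ (⊤ : ℕ∞) η) (hηc : HasCompactSupport η) (hdivη : ∀ x, vdiv η x = 0)
    (hρ : ContDiff ℝ (⊤ : ℕ∞) ρ) (hρc : HasCompactSupport ρ)
    (hz : ContDiff ℝ (⊤ : ℕ∞) z) (hzc : HasCompactSupport z)
    (hs : ContDiff ℝ (⊤ : ℕ∞) s) (hsc : HasCompactSupport s) :
    |Ared ν a τ η ρ z s| ≤ 3 * tnormPlus ν a τ η ρ * tnorm ν a τ z s := by
  have hKz : IsCompact (tsupport z ∪ tsupport s : Set _) := hzc.union hsc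
  have hnη : ∀ x, x ∉ tsupport η → ∀ i : Fin d, η x i = 0 :=
    fun x hx i => comp_zero_of_nmem hx i
  -- convection identity: convc a η z = - ∫ η · S₂
  have ie1 : Integrable (fun x => ∑ i, η x i * Sf a z s x i) :=
    int_dotF (F := fun x i => η x i) (G := fun x i => Sf a z s x i)
      (fun i => (comp_smooth hη i).continuous) (fun i => cont_Sf ha hz hs i) hKz
      (fun x hx i => by rw [Sf_zero hx, mul_zero])
  have ie2 : Integrable (fun x => ∑ i, grd s x i * η x i) :=
    int_dotF (F := fun x i => grd s x i) (G := fun x i => η x i)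
      (fun i => cont_grd hs i) (fun i => (comp_smooth hη i).continuous) hηc
      (fun x hx i => by rw [comp_zero_of_nmem hx, mul_zero])
  have hzη : convc a z η = (∫ x, ∑ i, η x i * Sf a z s x i)
      - ∫ x, ∑ i, grd s x i * η x i := by
    unfold convc
    have e : (fun x => ∑ i, adv a z x i * η x i)
        = fun x => (∑ i, η x i * Sf a z s x i) - ∑ i, grd s x i * η x i := by
      funext x
      rw [← Finset.sum_sub_distrib]
      exact Finset.sum_congr rfl fun i _ => by unfold Sf; ring
    rw [e, integral_sub ie1 ie2]
  have hgs0 : (∫ x, ∑ i, grd s x i * η x i) = 0 :=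
    grd_dot_zero hs hsc hη hηc hdivη
  have hanti := convc_add_eq_zero ha hdiva hη hηc hz hzc
  have hconv : convc a η z = - ∫ x, ∑ i, η x i * Sf a z s x i := by
    rw [hzη, hgs0] at hanti; linarith
  -- stabilization identity
  have i_g12 : Integrable (fun x => τ x * ∑ i, Sf a η ρ x i * Sf a z s x i) :=
    int_wdotF hτ (cont_Sf ha hη hρ) (cont_Sf ha hz hs) hKz
      (fun x hx i => by rw [Sf_zero hx, mul_zero])
  have i_p12 : Integrable (fun x => τ x * ∑ i, divVisc ν η x i * Sf a z s x i) :=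
    int_wdotF hτ (fun i => cont_divVisc hη i) (cont_Sf ha hz hs) hKz
      (fun x hx i => by rw [Sf_zero hx, mul_zero])
  have i_g22 : Integrable (fun x => τ x * ∑ i, Sf a z s x i * Sf a z s x i) :=
    int_wdotF hτ (cont_Sf ha hz hs) (cont_Sf ha hz hs) hKz
      (fun x hx i => by rw [Sf_zero hx, mul_zero])
  have i_j11 : Integrable (fun x => τ x * ∑ i, divVisc ν η x i * divVisc ν η x i) :=
    int_wdotF hτ (fun i => cont_divVisc hη i) (fun i => cont_divVisc hη i) hηc
      (fun x hx i => by rw [divVisc_zero hx, zero_mul])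
  have i_n11 : Integrable (fun x => (τ x)⁻¹ * ∑ i, η x i * η x i) :=
    int_wdotF (hτ.inv₀ (fun x => (hτ0 x).ne')) (fun i => (comp_smooth hη i).continuous)
      (fun i => (comp_smooth hη i).continuous) hηc
      (fun x hx i => by rw [comp_zero_of_nmem hx, zero_mul])
  have hstab : (∫ x, τ x * ∑ i, (adv a η x i - divVisc ν η x i + grd ρ x i)
        * (adv a z x i + grd s x i))
      = (∫ x, τ x * ∑ i, Sf a η ρ x i * Sf a z s x i)
        - ∫ x, τ x * ∑ i, divVisc ν η x i * Sf a z s x i := by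
    have e : (fun x => τ x * ∑ i, (adv a η x i - divVisc ν η x i + grd ρ x i)
          * (adv a z x i + grd s x i))
        = fun x => (τ x * ∑ i, Sf a η ρ x i * Sf a z s x i)
          - τ x * ∑ i, divVisc ν η x i * Sf a z s x i := by
      funext x
      rw [← mul_sub, ← Finset.sum_sub_distrib]
      exact congrArg _ (Finset.sum_congr rfl fun i _ => by unfold Sf; ring)
    rw [e, integral_sub i_g12 i_p12]
  have hared : Ared ν a τ η ρ z s
      = (kvisc ν η z + ∫ x, τ x * ∑ i, Sf a η ρ x i * Sf a z s x i)
        - (∫ x, τ x * ∑ i, divVisc ν η x i * Sf a z s x i)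
        - (∫ x, ∑ i, η x i * Sf a z s x i) := by
    unfold Ared
    rw [hconv, hstab]
    ring
  -- bounds
  have b1 := cs12 hν ha hτ hτ0 hη hηc hρ hρc hz hzc hs hsc
  have b2 := cs_int i_j11 i_p12 i_g22
    (fun x => mul_nonneg (hτ0 x).le (Finset.sum_nonneg fun i _ => mul_self_nonneg _))
    (fun x => mul_nonneg (hτ0 x).le (Finset.sum_nonneg fun i _ => mul_self_nonneg _))
    (fun t x => by
      have q1 := quad1_nonneg (τ x) t (hτ0 x).le (fun i => divVisc ν η x i)
        (fun i => Sf a z s x i)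
      linarith [q1])
  have b3 := cs_int i_n11 ie1 i_g22
    (fun x => mul_nonneg (inv_nonneg.mpr (hτ0 x).le)
      (Finset.sum_nonneg fun i _ => mul_self_nonneg _))
    (fun x => mul_nonneg (hτ0 x).le (Finset.sum_nonneg fun i _ => mul_self_nonneg _))
    (fun t x => by
      have q1 := quadw_nonneg (τ x) t (hτ0 x) (fun i => η x i) (fun i => Sf a z s x i)
      linarith [q1])
  -- comparisons with the plus-norm
  have hPlus : tnormPlusSq ν a τ η ρ = tnormSq ν a τ η ρ
      + (∫ x, τ x * ∑ i, divVisc ν η x i * divVisc ν η x i)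
      + ∫ x, (τ x)⁻¹ * ∑ i, η x i * η x i := tnormPlusSq_eq ν a τ η ρ
  have hT0 : 0 ≤ tnormSq ν a τ η ρ := tnormSq_nonneg (by linarith) (fun x => (hτ0 x).le) a η ρ
  have hJ0 : 0 ≤ ∫ x, τ x * ∑ i, divVisc ν η x i * divVisc ν η x i :=
    wdot_self_nonneg (fun x => (hτ0 x).le) _
  have hN0 : 0 ≤ ∫ x, (τ x)⁻¹ * ∑ i, η x i * η x i :=
    integral_nonneg fun x => mul_nonneg (inv_nonneg.mpr (hτ0 x).le)
      (Finset.sum_nonneg fun i _ => mul_self_nonneg _)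
  have c1 : tnorm ν a τ η ρ ≤ tnormPlus ν a τ η ρ :=
    tnorm_le_tnormPlus (by linarith) hτ0 a η ρ
  have c2 : Real.sqrt (∫ x, τ x * ∑ i, divVisc ν η x i * divVisc ν η x i)
      ≤ tnormPlus ν a τ η ρ := by
    apply Real.sqrt_le_sqrt
    rw [hPlus]; linarith
  have c3 : Real.sqrt (∫ x, (τ x)⁻¹ * ∑ i, η x i * η x i) ≤ tnormPlus ν a τ η ρ := by
    apply Real.sqrt_le_sqrt
    rw [hPlus]; linarith
  have c4 : Real.sqrt (∫ x, τ x * ∑ i, Sf a z s x i * Sf a z s x i) ≤ tnorm ν a τ z s := by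
    apply Real.sqrt_le_sqrt
    rw [tnormSq_eq]
    have := kvisc_self_nonneg (show (0:ℝ) ≤ ν by linarith) z
    linarith
  have hTz0 : 0 ≤ tnorm ν a τ z s := Real.sqrt_nonneg _
  have hTP0 : 0 ≤ tnormPlus ν a τ η ρ := Real.sqrt_nonneg _
  have d1 : |kvisc ν η z + ∫ x, τ x * ∑ i, Sf a η ρ x i * Sf a z s x i|
      ≤ tnormPlus ν a τ η ρ * tnorm ν a τ z s :=
    le_trans b1 (mul_le_mul_of_nonneg_right c1 hTz0)
  have d2 : |∫ x, τ x * ∑ i, divVisc ν η x i * Sf a z s x i|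
      ≤ tnormPlus ν a τ η ρ * tnorm ν a τ z s :=
    le_trans b2 (mul_le_mul c2 c4 (Real.sqrt_nonneg _) hTP0)
  have d3 : |∫ x, ∑ i, η x i * Sf a z s x i|
      ≤ tnormPlus ν a τ η ρ * tnorm ν a τ z s :=
    le_trans b3 (mul_le_mul c3 c4 (Real.sqrt_nonneg _) hTP0)
  rw [hared]
  have a1 := abs_le.mp d1
  have a2 := abs_le.mp d2
  have a3 := abs_le.mp d3
  rw [abs_le]
  constructor <;> [skip; skip] <;> · nlinarith [a1.1, a1.2, a2.1, a2.2, a3.1, a3.2]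

end OAux

namespace OAux
variable {d : ℕ} {ν : ℝ} {a : (Fin d → ℝ) → Fin d → ℝ} {τ : (Fin d → ℝ) → ℝ}
  {η z : (Fin d → ℝ) → Fin d → ℝ} {ρ s : (Fin d → ℝ) → ℝ}

lemma Sf_add (hη : ContDiff ℝ (⊤ : ℕ∞) η) (hz : ContDiff ℝ (⊤ : ℕ∞) z) (hρ : ContDiff ℝ (⊤ : ℕ∞) ρ)
    (hs : ContDiff ℝ (⊤ : ℕ∞) s) (x : Fin d → ℝ) (i : Fin d) :
    Sf a (η + z) (ρ + s) x i = Sf a η ρ x i + Sf a z s x i := by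
  unfold Sf
  rw [adv_add hη hz, grd_add hρ hs]
  ring

lemma tnorm_triangle (hν : 0 < ν) (ha : ContDiff ℝ (⊤ : ℕ∞) a) (hτ : Continuous τ)
    (hτ0 : ∀ x, 0 < τ x)
    (hη : ContDiff ℝ (⊤ : ℕ∞) η) (hηc : HasCompactSupport η)
    (hρ : ContDiff ℝ (⊤ : ℕ∞) ρ) (hρc : HasCompactSupport ρ)
    (hz : ContDiff ℝ (⊤ : ℕ∞) z) (hzc : HasCompactSupport z)
    (hs : ContDiff ℝ (⊤ : ℕ∞) s) (hsc : HasCompactSupport s) :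
    tnorm ν a τ (η + z) (ρ + s) ≤ tnorm ν a τ η ρ + tnorm ν a τ z s := by
  have hKη : IsCompact (tsupport η ∪ tsupport ρ : Set _) := hηc.union hρc
  have hKz : IsCompact (tsupport z ∪ tsupport s : Set _) := hzc.union hsc
  have i_f1 : Integrable (fun x => ∑ i, ∑ j, 2*ν*symGrad η x i j*symGrad η x i j) :=
    int_sgI hη hη hηc
  have i_f2 : Integrable (fun x => ∑ i, ∑ j, 2*ν*symGrad η x i j*symGrad z x i j) :=
    int_sgI hη hz hzc
  have i_f3 : Integrable (fun x => ∑ i, ∑ j, 2*ν*symGrad z x i j*symGrad z x i j) :=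
    int_sgI hz hz hzc
  have i_g1 : Integrable (fun x => τ x * ∑ i, Sf a η ρ x i * Sf a η ρ x i) :=
    int_wdotF hτ (cont_Sf ha hη hρ) (cont_Sf ha hη hρ) hKη
      (fun x hx i => by rw [Sf_zero hx, mul_zero])
  have i_g2 : Integrable (fun x => τ x * ∑ i, Sf a η ρ x i * Sf a z s x i) :=
    int_wdotF hτ (cont_Sf ha hη hρ) (cont_Sf ha hz hs) hKz
      (fun x hx i => by rw [Sf_zero hx, mul_zero])
  have i_g3 : Integrable (fun x => τ x * ∑ i, Sf a z s x i * Sf a z s x i) :=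
    int_wdotF hτ (cont_Sf ha hz hs) (cont_Sf ha hz hs) hKz
      (fun x hx i => by rw [Sf_zero hx, mul_zero])
  -- expansion of the viscous part
  have hvisc : kvisc ν (η + z) (η + z)
      = kvisc ν η η + kvisc ν η z * 2 + kvisc ν z z := by
    unfold kvisc
    have e : (fun x => ∑ i, ∑ j, 2*ν*symGrad (η + z) x i j*symGrad (η + z) x i j)
        = fun x => (∑ i, ∑ j, 2*ν*symGrad η x i j*symGrad η x i j)
          + (∑ i, ∑ j, 2*ν*symGrad η x i j*symGrad z x i j) * 2
          + (∑ i, ∑ j, 2*ν*symGrad z x i j*symGrad z x i j) * 1 := by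
      funext x
      rw [← dsum_split3]
      refine Finset.sum_congr rfl fun i _ => Finset.sum_congr rfl fun j _ => ?_
      rw [symGrad_add hη hz]
      ring
    rw [e, int_comb3 i_f1 i_f2 i_f3]
    ring
  -- expansion of the stabilization part
  have hst : (∫ x, τ x * ∑ i, Sf a (η + z) (ρ + s) x i * Sf a (η + z) (ρ + s) x i)
      = (∫ x, τ x * ∑ i, Sf a η ρ x i * Sf a η ρ x i)
        + (∫ x, τ x * ∑ i, Sf a η ρ x i * Sf a z s x i) * 2
        + ∫ x, τ x * ∑ i, Sf a z s x i * Sf a z s x i := by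
    have e : (fun x => τ x * ∑ i, Sf a (η + z) (ρ + s) x i * Sf a (η + z) (ρ + s) x i)
        = fun x => (τ x * ∑ i, Sf a η ρ x i * Sf a η ρ x i)
          + (τ x * ∑ i, Sf a η ρ x i * Sf a z s x i) * 2
          + (τ x * ∑ i, Sf a z s x i * Sf a z s x i) * 1 := by
      funext x
      have hsum : ∑ i, Sf a (η + z) (ρ + s) x i * Sf a (η + z) (ρ + s) x i
          = (∑ i, Sf a η ρ x i * Sf a η ρ x i)
            + (∑ i, Sf a η ρ x i * Sf a z s x i) * 2
            + (∑ i, Sf a z s x i * Sf a z s x i) * 1 := by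
        rw [← ssum_split3]
        refine Finset.sum_congr rfl fun i _ => ?_
        rw [Sf_add hη hz hρ hs]
        ring
      rw [hsum]
      ring
    rw [e, int_comb3 i_g1 i_g2 i_g3]
    ring
  have hexp : tnormSq ν a τ (η + z) (ρ + s)
      = tnormSq ν a τ η ρ
        + (kvisc ν η z + ∫ x, τ x * ∑ i, Sf a η ρ x i * Sf a z s x i) * 2
        + tnormSq ν a τ z s := by
    rw [tnormSq_eq, tnormSq_eq, tnormSq_eq, hvisc, hst]
    ring
  have hM := cs12 hν ha hτ hτ0 hη hηc hρ hρc hz hzc hs hsc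
  have hM' := (abs_le.mp hM).2
  have hTη := tnorm_sq' (show (0:ℝ) ≤ ν by linarith) (fun x => (hτ0 x).le) a η ρ
  have hTz := tnorm_sq' (show (0:ℝ) ≤ ν by linarith) (fun x => (hτ0 x).le) a z s
  have hb : tnormSq ν a τ (η + z) (ρ + s)
      ≤ (tnorm ν a τ η ρ + tnorm ν a τ z s) ^ 2 := by
    rw [hexp]
    nlinarith [hM', hTη, hTz]
  calc tnorm ν a τ (η + z) (ρ + s)
      = Real.sqrt (tnormSq ν a τ (η + z) (ρ + s)) := rfl
    _ ≤ Real.sqrt ((tnorm ν a τ η ρ + tnorm ν a τ z s) ^ 2) := Real.sqrt_le_sqrt hb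
    _ = tnorm ν a τ η ρ + tnorm ν a τ z s :=
        Real.sqrt_sq (add_nonneg (Real.sqrt_nonneg _) (Real.sqrt_nonneg _))

lemma main_est (hν : 0 < ν) (ha : ContDiff ℝ (⊤ : ℕ∞) a) (hdiva : ∀ x, vdiv a x = 0)
    (hτ : Continuous τ) (hτ0 : ∀ x, 0 < τ x)
    (hη : ContDiff ℝ (⊤ : ℕ∞) η) (hηc : HasCompactSupport η) (hdivη : ∀ x, vdiv η x = 0)
    (hρ : ContDiff ℝ (⊤ : ℕ∞) ρ) (hρc : HasCompactSupport ρ)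
    (hz : ContDiff ℝ (⊤ : ℕ∞) z) (hzc : HasCompactSupport z)
    (hs : ContDiff ℝ (⊤ : ℕ∞) s) (hsc : HasCompactSupport s)
    (hinvz : (∫ x, τ x * ∑ i, (divVisc ν z x i)^2) ≤ ∫ x, ∑ i, ∑ j, 2*ν*(symGrad z x i j)^2)
    (hgal : Ared ν a τ (η + z) (ρ + s) z s = 0) :
    tnorm ν a τ (η + z) (ρ + s) ≤ 7 * tnormPlus ν a τ η ρ := by
  have hA := coerc hν ha hdiva hτ hτ0 hz hzc hs hsc hinvz
  have hB := Ared_split (ν := ν) ha hτ hη hηc hρ hρc hz hzc hs hsc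
  have hC := Ared_bound hν ha hdiva hτ hτ0 hη hηc hdivη hρ hρc hz hzc hs hsc
  have hTz := tnorm_sq' (show (0:ℝ) ≤ ν by linarith) (fun x => (hτ0 x).le) a z s
  have hTz0 : 0 ≤ tnorm ν a τ z s := Real.sqrt_nonneg _
  have hTP0 : 0 ≤ tnormPlus ν a τ η ρ := Real.sqrt_nonneg _
  -- ‖z‖ ≤ 6 ‖η‖₊
  have hzb : tnorm ν a τ z s ≤ 6 * tnormPlus ν a τ η ρ := by
    have h1 : Ared ν a τ z s z s = - Ared ν a τ η ρ z s := by
      rw [hgal] at hB; linarith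
    have h2 : tnorm ν a τ z s * tnorm ν a τ z s
        ≤ 6 * (tnormPlus ν a τ η ρ * tnorm ν a τ z s) := by
      have := (abs_le.mp hC).1
      rw [hTz]
      linarith [hA, h1]
    rcases eq_or_lt_of_le hTz0 with h | h
    · rw [← h]; positivity
    · have := le_of_mul_le_mul_right (by linarith [h2] :
        tnorm ν a τ z s * tnorm ν a τ z s ≤ (6 * tnormPlus ν a τ η ρ) * tnorm ν a τ z s) h
      linarith [this]
  have htri := tnorm_triangle hν ha hτ hτ0 hη hηc hρ hρc hz hzc hs hsc
  have hle := tnorm_le_tnormPlus (show (0:ℝ) ≤ ν by linarith) hτ0 a η ρ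
  linarith

end OAux

namespace OAux

lemma hcs_sub {α β : Type*} [TopologicalSpace α] [T2Space α] [AddGroup β] {f g : α → β}
    (hf : HasCompactSupport f) (hg : HasCompactSupport g) : HasCompactSupport (f - g) :=
  HasCompactSupport.intro (hf.union hg) (fun x hx => by
    simp only [Set.mem_union] at hx
    push_neg at hx
    have h1 : f x = 0 := image_eq_zero_of_notMem_tsupport hx.1
    have h2 : g x = 0 := image_eq_zero_of_notMem_tsupport hx.2
    simp [Pi.sub_apply, h1, h2])

end OAux

/-- error estimate for the reduced Oseen formulation (Theorem 1, concrete form). -/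
theorem oseen_error_estimate (hd : 1 ≤ d) (ν : ℝ) (hν : 0 < ν)
    (a : (Fin d → ℝ) → Fin d → ℝ) (ha : ContDiff ℝ (⊤ : ℕ∞) a) (hdiva : ∀ x, vdiv a x = 0)
    (τ : (Fin d → ℝ) → ℝ) (hτ : Continuous τ) (hτ0 : ∀ x, 0 < τ x)
    (Vh : Submodule ℝ ((Fin d → ℝ) → Fin d → ℝ))
    (hVh : ∀ v ∈ Vh, ContDiff ℝ (⊤ : ℕ∞) v ∧ HasCompactSupport v ∧ ∀ x, vdiv v x = 0)
    (Qt : Submodule ℝ ((Fin d → ℝ) → ℝ))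
    (hQt : ∀ q ∈ Qt, ContDiff ℝ (⊤ : ℕ∞) q ∧ HasCompactSupport q)
    (hinv : ∀ v ∈ Vh, (∫ x, τ x * ∑ i, (divVisc ν v x i) ^ 2) ≤
      ∫ x, ∑ i, ∑ j, 2 * ν * (symGrad v x i j) ^ 2)
    (u : (Fin d → ℝ) → Fin d → ℝ) (hu : ContDiff ℝ (⊤ : ℕ∞) u) (huc : HasCompactSupport u)
    (hdivu : ∀ x, vdiv u x = 0)
    (p : (Fin d → ℝ) → ℝ) (hp : ContDiff ℝ (⊤ : ℕ∞) p) (hpc : HasCompactSupport p)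
    (u_h : (Fin d → ℝ) → Fin d → ℝ) (hu_h : u_h ∈ Vh)
    (pt : (Fin d → ℝ) → ℝ) (hpt : pt ∈ Qt)
    (horth : ∀ v ∈ Vh, ∀ q ∈ Qt, Ared ν a τ (u - u_h) (p - pt) v q = 0) :
    ∀ w ∈ Vh, ∀ r ∈ Qt,
      tnorm ν a τ (u - u_h) (p - pt) ≤ 7 * tnormPlus ν a τ (u - w) (p - r) := by

  intro w hw r hr
  obtain ⟨hws, hwc, hwdiv⟩ := hVh w hw
  obtain ⟨hu_hs, hu_hc, hu_hdiv⟩ := hVh u_h hu_h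
  obtain ⟨hrs, hrc⟩ := hQt r hr
  obtain ⟨hpts, hptc⟩ := hQt pt hpt
  -- the discrete error pieces
  have hzmem : w - u_h ∈ Vh := Submodule.sub_mem _ hw hu_h
  have hsmem : r - pt ∈ Qt := Submodule.sub_mem _ hr hpt
  obtain ⟨hzs, hzc, hzdiv⟩ := hVh (w - u_h) hzmem
  obtain ⟨hss, hsc⟩ := hQt (r - pt) hsmem
  have hηs : ContDiff ℝ (⊤ : ℕ∞) (u - w) := hu.sub hws
  have hηc : HasCompactSupport (u - w) := OAux.hcs_sub huc hwc
  have hρs : ContDiff ℝ (⊤ : ℕ∞) (p - r) := hp.sub hrs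
  have hρc : HasCompactSupport (p - r) := OAux.hcs_sub hpc hrc
  have hdivη : ∀ x, vdiv (u - w) x = 0 := fun x => by
    rw [OAux.vdiv_sub hu hws, hdivu, hwdiv, sub_zero]
  have hgal := horth (w - u_h) hzmem (r - pt) hsmem
  have hinvz := hinv (w - u_h) hzmem
  have eu : u - u_h = (u - w) + (w - u_h) := (sub_add_sub_cancel u w u_h).symm
  have ep : p - pt = (p - r) + (r - pt) := (sub_add_sub_cancel p r pt).symm
  rw [eu, ep] at hgal ⊢
  exact OAux.main_est hν ha hdiva hτ hτ0 hηs hηc hdivη hρs hρc hzs hzc hss hsc hinvz hgal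
end
end
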